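/- arXiv:math-ph/0203018 — 6 statements merged into one kernel-verified Lean document; each statement's English description precedes it below -/
import Mathlib

section
/- The set E = {α ∈ (0,1) irrational : there exists B such that q_k + 1 ≤ B^k for all k ∈ ℕ}, where q_k are the continued fraction denominators of α, has full Lebesgue measure in (0,1). -/
/-!
The first `k` partial quotients `a₁, …, a_k` of `α` determine the convergent `p_k / q_k`, which
lies within `1 / q_k²` of `α`, and `q_k ≥ a₁ ⋯ a_k`. So the set where `q_k ≥ R^(2k)` is covered
by one interval per tuple `(aᵢ)`, of length `2 / q_k² ≤ 2 R^(-k) ∏ aᵢ^(-3/2)`; the total length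
is `2 (R⁻¹ ∑ₙ n^(-3/2))^k`, summable in `k` once `R` is large. By Borel–Cantelli almost every
`α` has `q_k < R^(2k)` for all large `k`, and the finitely many other `k` only enlarge the base.
-/

open MeasureTheory Filter
open scoped ENNReal

theorem ENNReal.tsum_fin_pi_prod {ι : Type*} (f : ι → ℝ≥0∞) (k : ℕ) :
    ∑' a : Fin k → ι, ∏ i, f (a i) = (∑' i, f i) ^ k := by
  induction k with
  | zero => simp
  | succ k ih =>
    rw [← (Fin.consEquiv fun _ => ι).tsum_eq]
    simp only [Fin.consEquiv, Equiv.coe_fn_mk, Fin.prod_univ_succ, Fin.cons_zero, Fin.cons_succ]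
    rw [ENNReal.tsum_prod', pow_succ', ← ih, ← ENNReal.tsum_mul_right]
    simp only [ENNReal.tsum_mul_left]

theorem tsum_pnat_ofReal_rpow_ne_top {p : ℝ} (hp : 1 < p) :
    ∑' n : ℕ+, ENNReal.ofReal ((n : ℝ) ^ (-p)) ≠ ⊤ := by
  have hsum : Summable fun n : ℕ+ => (n : ℝ) ^ (-p) :=
    (Real.summable_nat_rpow.2 (by linarith)).comp_injective PNat.coe_injective
  rw [← ENNReal.ofReal_tsum_of_nonneg (fun _ => by positivity) hsum]
  exact ENNReal.ofReal_ne_top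

theorem inv_sq_le_inv_mul_rpow {q R P : ℝ} (hR : 0 < R) (hP : 0 < P) (hRq : R ^ 2 ≤ q)
    (hPq : P ≤ q) : (q ^ 2)⁻¹ ≤ R⁻¹ * P ^ (-(3/2) : ℝ) := by
  have hq : 0 < q := hP.trans_le hPq
  have hsplit : q ^ 2 = q ^ (1/2 : ℝ) * q ^ (3/2 : ℝ) := by
    rw [← Real.rpow_add hq, ← Real.rpow_natCast]; norm_num
  have hRsqrt : R ≤ q ^ (1/2 : ℝ) := by
    rw [← Real.sqrt_eq_rpow]; exact Real.le_sqrt_of_sq_le hRq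
  rw [Real.rpow_neg hP.le, ← mul_inv, hsplit]
  exact inv_anti₀ (by positivity) (by gcongr)

theorem exists_pow_bound_of_eventually_lt {u : ℕ → ℝ} {c : ℝ} (hc : 0 ≤ c)
    (h : ∀ᶠ k in atTop, u k < c ^ k) : ∃ B : ℝ, ∀ k, 1 ≤ k → u k + 1 ≤ B ^ k := by
  obtain ⟨N, hN⟩ := eventually_atTop.1 h
  obtain ⟨M, hM⟩ := ((Set.finite_Iio N).image fun k => u k + 1).bddAbove
  refine ⟨max M 1 + c, fun k hk => ?_⟩
  have hB : 1 ≤ max M 1 + c := (le_max_right M 1).trans (le_add_of_nonneg_right hc)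
  rcases lt_or_ge k N with hkN | hkN
  · calc u k + 1 ≤ M := hM ⟨k, hkN, rfl⟩
      _ ≤ max M 1 + c := (le_max_left M 1).trans (le_add_of_nonneg_right hc)
      _ ≤ (max M 1 + c) ^ k := le_self_pow₀ hB (by omega)
  · calc u k + 1 ≤ c ^ k + 1 ^ k := by rw [one_pow]; exact (add_lt_add_left (hN k hkN) 1).le
      _ ≤ (c + 1) ^ k := pow_add_pow_le hc zero_le_one (by omega)
      _ ≤ (max M 1 + c) ^ k := pow_le_pow_left₀ (by linarith) (by linarith [le_max_right M 1]) k

namespace GenContFract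

section Congr

variable {K : Type*} [DivisionRing K] {g g' : GenContFract K} {n : ℕ}

theorem contsAux_congr (hh : g.h = g'.h) (hs : ∀ i < n, g.s.get? i = g'.s.get? i) :
    ∀ m ≤ n + 1, g.contsAux m = g'.contsAux m := by
  intro m
  induction m using Nat.strong_induction_on with
  | _ m ih =>
    intro hm
    match m with
    | 0 => rfl
    | 1 => simp [contsAux, hh]
    | m + 2 =>
      simp only [contsAux, hs m (by omega), ih m (by omega) (by omega),
        ih (m + 1) (by omega) (by omega)]

theorem conts_congr (hh : g.h = g'.h) (hs : ∀ i < n, g.s.get? i = g'.s.get? i) :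
    g.conts n = g'.conts n := by
  simp only [nth_cont_eq_succ_nth_contAux]
  exact contsAux_congr hh hs (n + 1) le_rfl

end Congr

-- Junk value `1` once the expansion of a rational `α` has terminated.
noncomputable def partQuot (α : ℝ) (n : ℕ) : ℕ+ :=
  Nat.toPNat' ⌊((GenContFract.of α).partDens.get? n).getD 0⌋₊

theorem of_s_get?_eq_partQuot {α : ℝ} (hα : Irrational α) (n : ℕ) :
    (GenContFract.of α).s.get? n = some ⟨1, partQuot α n⟩ := by
  obtain ⟨gp, hgp⟩ : ∃ gp, (GenContFract.of α).s.get? n = some gp := by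
    refine Option.ne_none_iff_exists'.1 fun h => ?_
    obtain ⟨q, rfl⟩ := (terminates_iff_rat α).1 ⟨n, h⟩
    exact hα ⟨q, rfl⟩
  obtain ⟨ha, z, hz⟩ := of_partNum_eq_one_and_exists_int_partDen_eq hgp
  have hb := partDen_eq_s_b hgp
  have h1 : (1 : ℝ) ≤ gp.b := of_one_le_get?_partDen hb
  have hz1 : 1 ≤ z := by exact_mod_cast hz ▸ h1
  lift z to ℕ using by omega
  have hq : (partQuot α n : ℝ) = gp.b := by
    rw [partQuot, hb, Option.getD_some, hz, Int.cast_natCast, Nat.floor_natCast,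
      PNat.toPNat'_coe (by omega)]
  rw [hgp, hq, ← ha]

theorem prod_partQuot_le_dens {α : ℝ} (hα : Irrational α) (k : ℕ) :
    ∏ i : Fin k, (partQuot α i : ℝ) ≤ (GenContFract.of α).dens k := by
  induction k with
  | zero => simp [zeroth_den_eq_one]
  | succ k ih =>
    rw [Fin.prod_univ_castSucc, mul_comm]
    have h := le_of_succ_get?_den (partDen_eq_s_b (of_s_get?_eq_partQuot hα k))
    simp only [Fin.val_castSucc, Fin.val_last]
    calc _ ≤ (partQuot α k : ℝ) * (GenContFract.of α).dens k := by gcongr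
      _ ≤ _ := h

theorem abs_sub_convs_le_inv_dens_sq {α : ℝ} (hα : Irrational α) (k : ℕ) :
    |α - (GenContFract.of α).convs k| ≤ ((GenContFract.of α).dens k ^ 2)⁻¹ := by
  have h := abs_sub_convergents_le' (partDen_eq_s_b (of_s_get?_eq_partQuot hα k))
  refine h.trans ?_
  have hq : 0 < (GenContFract.of α).dens k :=
    lt_of_lt_of_le (by positivity) (prod_partQuot_le_dens hα k)
  rw [one_div, sq, mul_assoc]
  exact inv_anti₀ (by positivity)
    (le_mul_of_one_le_left (by positivity) (Nat.one_le_cast.2 (partQuot α k).pos))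

section Cylinder

variable {k : ℕ}

def cylinder (a : Fin k → ℕ+) : Set ℝ :=
  {α | α ∈ Set.Ioo 0 1 ∧ Irrational α ∧ ∀ i : Fin k, partQuot α i = a i}

theorem conts_eq_of_mem_cylinder {a : Fin k → ℕ+} {α β : ℝ} (hα : α ∈ cylinder a)
    (hβ : β ∈ cylinder a) : (GenContFract.of α).conts k = (GenContFract.of β).conts k := by
  have hfloor {x : ℝ} (hx : x ∈ Set.Ioo (0 : ℝ) 1) : ⌊x⌋ = 0 :=
    Int.floor_eq_zero_iff.2 ⟨hx.1.le, hx.2⟩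
  refine conts_congr ?_ fun i hi => ?_
  · rw [of_h_eq_floor, of_h_eq_floor, hfloor hα.1, hfloor hβ.1]
  · rw [of_s_get?_eq_partQuot hα.2.1, of_s_get?_eq_partQuot hβ.2.1, hα.2.2 ⟨i, hi⟩,
      hβ.2.2 ⟨i, hi⟩]

theorem cylinder_subset_closedBall {a : Fin k → ℕ+} {β : ℝ} (hβ : β ∈ cylinder a) :
    cylinder a ⊆
      Metric.closedBall ((GenContFract.of β).convs k) (((GenContFract.of β).dens k ^ 2)⁻¹) := by
  intro α hα
  have h := conts_eq_of_mem_cylinder hα hβ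
  have hq : (GenContFract.of α).dens k = (GenContFract.of β).dens k := by
    simp only [den_eq_conts_b, h]
  have hp : (GenContFract.of α).convs k = (GenContFract.of β).convs k := by
    simp only [conv_eq_num_div_den, num_eq_conts_a, den_eq_conts_b, h]
  rw [Metric.mem_closedBall, Real.dist_eq, ← hp, ← hq]
  exact abs_sub_convs_le_inv_dens_sq hα.2.1 k

theorem volume_cylinder_inter_le (a : Fin k → ℕ+) {R : ℝ} (hR : 0 < R) :
    volume (cylinder a ∩ {α | R ^ 2 ≤ (GenContFract.of α).dens k}) ≤
      2 * ENNReal.ofReal R⁻¹ * ∏ i, ENNReal.ofReal ((a i : ℝ) ^ (-(3/2) : ℝ)) := by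
  rcases (cylinder a ∩ {α | R ^ 2 ≤ (GenContFract.of α).dens k}).eq_empty_or_nonempty
    with h | ⟨β, hβa, hβR⟩
  · simp [h]
  have hP : ∏ i, (a i : ℝ) ≤ (GenContFract.of β).dens k := by
    simpa only [hβa.2.2] using prod_partQuot_le_dens hβa.2.1 k
  calc volume (cylinder a ∩ {α | R ^ 2 ≤ (GenContFract.of α).dens k})
      ≤ volume (Metric.closedBall ((GenContFract.of β).convs k)
          (((GenContFract.of β).dens k ^ 2)⁻¹)) :=
        measure_mono (Set.inter_subset_left.trans (cylinder_subset_closedBall hβa))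
    _ ≤ ENNReal.ofReal (2 * (R⁻¹ * (∏ i, (a i : ℝ)) ^ (-(3/2) : ℝ))) := by
        rw [Real.volume_closedBall]
        gcongr
        exact inv_sq_le_inv_mul_rpow hR (by positivity) hβR hP
    _ = 2 * ENNReal.ofReal R⁻¹ * ∏ i, ENNReal.ofReal ((a i : ℝ) ^ (-(3/2) : ℝ)) := by
        rw [← Real.finsetProd_rpow _ _ fun i _ => by positivity,
          ENNReal.ofReal_mul zero_le_two, ENNReal.ofReal_mul (by positivity),
          ENNReal.ofReal_prod_of_nonneg fun i _ => by positivity, ENNReal.ofReal_ofNat, mul_assoc]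

end Cylinder

theorem volume_setOf_pow_sq_le_dens_le (k : ℕ) {R : ℝ} (hR : 0 < R) :
    volume {α | α ∈ Set.Ioo 0 1 ∧ Irrational α ∧ (R ^ k) ^ 2 ≤ (GenContFract.of α).dens k} ≤
      2 * (ENNReal.ofReal R⁻¹ * ∑' n : ℕ+, ENNReal.ofReal ((n : ℝ) ^ (-(3/2) : ℝ))) ^ k := by
  have hcover : {α | α ∈ Set.Ioo 0 1 ∧ Irrational α ∧ (R ^ k) ^ 2 ≤ (GenContFract.of α).dens k}
      ⊆ ⋃ a : Fin k → ℕ+, cylinder a ∩ {α | (R ^ k) ^ 2 ≤ (GenContFract.of α).dens k} :=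
    fun α ⟨hα, hirr, hR⟩ => Set.mem_iUnion.2 ⟨fun i => partQuot α i, ⟨hα, hirr, fun _ => rfl⟩, hR⟩
  calc _ ≤ ∑' a : Fin k → ℕ+,
          volume (cylinder a ∩ {α | (R ^ k) ^ 2 ≤ (GenContFract.of α).dens k}) :=
        (measure_mono hcover).trans (measure_iUnion_le _)
    _ ≤ ∑' a : Fin k → ℕ+, 2 * ENNReal.ofReal (R ^ k)⁻¹ *
          ∏ i, ENNReal.ofReal ((a i : ℝ) ^ (-(3/2) : ℝ)) :=
        ENNReal.tsum_le_tsum fun a => volume_cylinder_inter_le a (by positivity)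
    _ = _ := by
        rw [ENNReal.tsum_mul_left,
          ENNReal.tsum_fin_pi_prod fun n : ℕ+ => ENNReal.ofReal ((n : ℝ) ^ (-(3/2) : ℝ)),
          mul_assoc, mul_pow, ← inv_pow, ENNReal.ofReal_pow (by positivity)]

theorem exists_tsum_volume_pow_le_dens_ne_top : ∃ c : ℝ, 0 ≤ c ∧
    ∑' k : ℕ, volume {α | α ∈ Set.Ioo 0 1 ∧ Irrational α ∧ c ^ k ≤ (GenContFract.of α).dens k}
      ≠ ⊤ := by
  obtain ⟨C, hC⟩ :=
    ENNReal.exists_nat_gt (tsum_pnat_ofReal_rpow_ne_top (by norm_num : (1 : ℝ) < 3/2))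
  have hC0 : (0 : ℝ) < C := by exact_mod_cast zero_le.trans_lt hC
  set r : ℝ≥0∞ := ENNReal.ofReal (C : ℝ)⁻¹ * ∑' n : ℕ+, ENNReal.ofReal ((n : ℝ) ^ (-(3/2) : ℝ))
    with hr_def
  have hr : r < 1 := by
    rw [hr_def, ENNReal.ofReal_inv_of_pos hC0, ENNReal.ofReal_natCast, mul_comm, ← div_eq_mul_inv,
      ENNReal.div_lt_iff (.inl (by simpa using hC0.ne')) (.inl (ENNReal.natCast_ne_top C)), one_mul]
    exact hC
  have hsq (k : ℕ) : ((C : ℝ) ^ 2) ^ k = ((C : ℝ) ^ k) ^ 2 := by ring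
  refine ⟨(C : ℝ) ^ 2, by positivity, ne_top_of_le_ne_top ?_
    (ENNReal.tsum_le_tsum (g := fun k => 2 * r ^ k) fun k => ?_)⟩
  · rw [ENNReal.tsum_mul_left, ENNReal.tsum_geometric]
    exact ENNReal.mul_ne_top ENNReal.ofNat_ne_top (ENNReal.inv_ne_top.2 (tsub_pos_of_lt hr).ne')
  · simpa only [hsq] using volume_setOf_pow_sq_le_dens_le k hC0

end GenContFract

/-- The set of irrational `α ∈ (0,1)` whose continued fraction denominators `q k`
grow at most exponentially (`q k + 1 ≤ B ^ k` for some `B`) has full Lebesgue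
measure in `(0,1)`. -/
theorem cf_denominators_exp_bound_full_measure :
    volume (Set.Ioo (0 : ℝ) 1 \
      {α : ℝ | α ∈ Set.Ioo (0 : ℝ) 1 ∧ Irrational α ∧
        ∃ B : ℝ, ∀ k : ℕ, 1 ≤ k → (GenContFract.of α).dens k + 1 ≤ B ^ k}) = 0 := by
  obtain ⟨c, hc, hsum⟩ := GenContFract.exists_tsum_volume_pow_le_dens_ne_top
  refine measure_mono_null ?_ (measure_union_null
    ((Set.countable_range ((↑) : ℚ → ℝ)).measure_zero volume) (measure_limsup_atTop_eq_zero hsum))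
  rintro α ⟨hα, hαE⟩
  by_cases hirr : Irrational α
  · right
    by_contra hfreq
    rw [mem_limsup_iff_frequently_mem, not_frequently] at hfreq
    obtain ⟨B, hB⟩ := exists_pow_bound_of_eventually_lt hc
      (hfreq.mono fun k hk => not_le.1 fun hle => hk ⟨hα, hirr, hle⟩)
    exact hαE ⟨hα, hirr, B, hB⟩
  · left
    simpa [Irrational] using hirr
end

section
/- If a finite word w of length n has the property that the number of occurrences of a fixed letter in w is coprime to n, then the n cyclic permutations (rotations) of w are pairwise distinct. -/
/-!
If `w.rotate k = w`, the letter pattern of `w` read cyclically has both periods `n = |w|` and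
`k`. Counting the letter in the first `k * n` positions in two ways gives `k * h(w) = n * c`,
where `c` counts it among the first `k` positions; since `h(w)` is coprime to `n`, `n ∣ k`.
-/

open Function

theorem Nat.count_mul_of_periodic {p : ℕ → Prop} [DecidablePred p] {k : ℕ} (hp : Periodic p k)
    (m : ℕ) : Nat.count p (m * k) = m * Nat.count p k := by
  induction m with
  | zero => simp
  | succ m ih =>
    have hshift : (fun j ↦ p (m * k + j)) = p := funext fun j ↦ by
      rw [add_comm]; exact hp.nat_mul m j
    simp only [Nat.succ_mul, Nat.count_add, ih, hshift]

namespace List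

variable {α : Type*} [DecidableEq α]

theorem count_getElem?_eq_count (l : List α) (a : α) :
    Nat.count (fun i ↦ l[i]? = some a) l.length = l.count a := by
  induction l with
  | nil => simp
  | cons x t ih =>
    rw [length_cons, Nat.count_succ', count_cons]
    simp only [getElem?_cons_succ, getElem?_cons_zero, Option.some.injEq, ih, beq_iff_eq]

theorem count_head?_rotate_eq_count (l : List α) (a : α) :
    Nat.count (fun i ↦ (l.rotate i).head? = some a) l.length = l.count a := by
  rw [← count_getElem?_eq_count, Nat.count_eq_card_filter_range, Nat.count_eq_card_filter_range,
    Finset.filter_congr fun i hi ↦ by rw [head?_rotate (Finset.mem_range.1 hi)]]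

theorem length_dvd_of_rotate_eq_self {l : List α} {k : ℕ} (a : α)
    (hcop : (l.count a).Coprime l.length) (h : l.rotate k = l) : l.length ∣ k := by
  set p : ℕ → Prop := fun i ↦ (l.rotate i).head? = some a
  have hlen : Periodic p l.length := fun i ↦ by
    simp only [p]
    rw [← rotate_mod l (i + _), Nat.add_mod_right, rotate_mod]
  have hk : Periodic p k := fun i ↦ by
    simp only [p, add_comm i, ← rotate_rotate, h]
  have hcount : l.length * Nat.count p k = k * l.count a := by
    rw [← count_head?_rotate_eq_count, ← Nat.count_mul_of_periodic hk,
      ← Nat.count_mul_of_periodic hlen, mul_comm]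
  exact hcop.symm.dvd_of_dvd_mul_right ⟨_, hcount.symm⟩

end List

theorem rotations_distinct_of_coprime_count_general {A : Type*} [DecidableEq A]
    (w : List A) (n : ℕ) (hn : w.length = n) (a : A)
    (hcop : Nat.Coprime (w.count a) n) :
    ∀ i j, i < n → j < n → w.rotate i = w.rotate j → i = j := by
  intro i j hi hj hij
  wlog hle : i ≤ j generalizing i j
  · exact (this j i hj hi hij.symm (by omega)).symm
  have hfix : (w.rotate i).rotate (j - i) = w.rotate i := by
    rw [List.rotate_rotate, Nat.add_sub_cancel' hle, hij]
  have hdvd : n ∣ j - i := by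
    have := List.length_dvd_of_rotate_eq_self a
      (by rwa [(w.rotate_perm i).count_eq, List.length_rotate, hn]) hfix
    rwa [List.length_rotate, hn] at this
  have := Nat.eq_zero_of_dvd_of_lt hdvd (by omega)
  omega

/-- If the number of occurrences of a fixed letter in a word `w` of length `n` is
coprime to `n`, then the `n` rotations of `w` are pairwise distinct. -/
theorem rotations_distinct_of_coprime_count {A : Type*} [DecidableEq A] [Fintype A]
    (w : List A) (n : ℕ) (hn : w.length = n) (a : A)
    (hcop : Nat.Coprime (w.count a) n) :
    ∀ i j, i < n → j < n → w.rotate i = w.rotate j → i = j :=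
  rotations_distinct_of_coprime_count_general w n hn a hcop
end

section
/- For every k ≥ 1, the characteristic Sturmian word w = v_{α,0}(1) v_{α,0}(2) … contains the factor s_{k-1} s_k s_k, where s_k are the standard words. Specifically, s_{k+3} = ((s_k^{a_{k+1}} s_{k-1})^{a_{k+2}} s_k)^{a_{k+3}} s_k^{a_{k+1}} s_{k-1} contains s_{k-1} s_k s_k as a factor. -/
/-- For every `k ≥ 1`, the word `s (k-1) ++ s k ++ s k` is a factor of `s (k+3)`
(and hence of the characteristic Sturmian word, of which `s (k+3)` is a prefix). -/
theorem factor_s_km1_sk_sk (a : ℕ → ℕ) (ha : ∀ k, 1 ≤ a k)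
    (s : ℕ → List Bool)
    (hs0 : s 0 = [false])
    (hs1 : s 1 = List.replicate (a 1 - 1) false ++ [true])
    (hs : ∀ k, s (k + 2) = (List.replicate (a (k + 2)) (s (k + 1))).flatten ++ s k) :
    ∀ k, 1 ≤ k → (s (k - 1) ++ s k ++ s k) <:+: s (k + 3) := by
  intro k hk
  obtain ⟨j, rfl⟩ : ∃ j, k = j + 1 := ⟨k - 1, (Nat.succ_pred_eq_of_pos hk).symm⟩
  simp only [Nat.add_sub_cancel]
  obtain ⟨b', hb'⟩ : ∃ b', a (j + 2) = b' + 1 := ⟨a (j + 2) - 1,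
    (Nat.succ_pred_eq_of_pos (ha _)).symm⟩
  obtain ⟨c', hc'⟩ : ∃ c', a (j + 3) = c' + 1 := ⟨a (j + 3) - 1,
    (Nat.succ_pred_eq_of_pos (ha _)).symm⟩
  obtain ⟨d', hd'⟩ : ∃ d', a (j + 4) = d' + 1 := ⟨a (j + 4) - 1,
    (Nat.succ_pred_eq_of_pos (ha _)).symm⟩
  have hB : s (j + 2) = (List.replicate (a (j + 2)) (s (j + 1))).flatten ++ s j := hs j
  have hC : s (j + 3) = (List.replicate (a (j + 3)) (s (j + 2))).flatten ++ s (j + 1) :=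
    hs (j + 1)
  have hD : s (j + 4) = (List.replicate (a (j + 4)) (s (j + 3))).flatten ++ s (j + 2) :=
    hs (j + 2)
  -- B starts with A
  have hBstart : s (j + 2)
      = s (j + 1) ++ ((List.replicate b' (s (j + 1))).flatten ++ s j) := by
    rw [hB, hb', List.replicate_succ, List.flatten_cons, List.append_assoc]
  have hAB : s (j + 1) <+: s (j + 2) := ⟨_, hBstart.symm⟩
  -- C = Q ++ B ++ A  with Q = flatten (replicate c' B)
  have hCsplit : s (j + 3)
      = (List.replicate c' (s (j + 2))).flatten ++ s (j + 2) ++ s (j + 1) := by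
    rw [hC, hc', List.replicate_succ', List.flatten_append]
    simp [List.append_assoc]
  have hBC : s (j + 2) <+: s (j + 3) := by
    rw [hC, hc', List.replicate_succ, List.flatten_cons, List.append_assoc]
    exact List.prefix_append _ _
  -- the part of D after the first copy of C starts with A
  have hP : s (j + 1) <+: (List.replicate d' (s (j + 3))).flatten ++ s (j + 2) := by
    cases d' with
    | zero => simpa using hAB
    | succ e =>
      rw [List.replicate_succ, List.flatten_cons, List.append_assoc]
      exact (hAB.trans hBC).trans (List.prefix_append _ _)
  obtain ⟨t, ht⟩ := hP
  set Q := (List.replicate c' (s (j + 2))).flatten with hQ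
  rw [hB] at hCsplit
  -- now assemble D
  have hDsplit : s (j + 4)
      = (Q ++ (List.replicate (a (j + 2)) (s (j + 1))).flatten)
        ++ (s j ++ s (j + 1) ++ s (j + 1)) ++ t := by
    rw [hD, hd', List.replicate_succ, List.flatten_cons, List.append_assoc, ← ht, hCsplit]
    simp only [List.append_assoc]
  exact ⟨_, t, hDsplit.symm⟩
end

section
/- The complexity function of the characteristic Sturmian word w (with v_{α,0}(n) = χ_{[1-α,1)}(nα mod 1), α irrational) satisfies p_w(n) = n + 1 for every n ≥ 1; i.e., w has exactly n+1 distinct factors of each length n. -/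
namespace SturmianAux

lemma fract_shift (c t : ℝ) : Int.fract (Int.fract c + t) = Int.fract (c + t) := by
  have h : c + t = Int.fract c + t + (⌊c⌋ : ℤ) := by
    rw [Int.fract]; ring
  rw [h, Int.fract_add_intCast]

lemma fract_ne_zero {x : ℝ} (h : Irrational x) : Int.fract x ≠ 0 := by
  intro h0
  have : x = (⌊x⌋ : ℤ) := by
    have := Int.self_sub_floor x
    rw [h0] at this; linarith
  exact h.ne_int _ this

lemma floor_sum_neg {x : ℝ} (h : Irrational x) : ⌊x⌋ + ⌊-x⌋ = -1 := by
  have h1 : Int.fract (-x) = 1 - Int.fract x := Int.fract_neg (fract_ne_zero h)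
  have h2 : x - ⌊x⌋ = Int.fract x := Int.self_sub_floor x
  have h3 : -x - ⌊-x⌋ = Int.fract (-x) := Int.self_sub_floor (-x)
  have : ((⌊x⌋ + ⌊-x⌋ : ℤ) : ℝ) = (-1 : ℤ) := by push_cast; linarith
  exact_mod_cast this

variable {α : ℝ}

lemma floor_step (hα0 : 0 < α) (hα1 : α < 1) (x : ℝ) :
    (1 - α ≤ Int.fract x ↔ ⌊x + α⌋ = ⌊x⌋ + 1) ∧
    (Int.fract x < 1 - α ↔ ⌊x + α⌋ = ⌊x⌋) := by
  have h1 : (⌊x⌋ : ℝ) ≤ x := Int.floor_le x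
  have h2 : x < ⌊x⌋ + 1 := Int.lt_floor_add_one x
  have hf : x - ⌊x⌋ = Int.fract x := Int.self_sub_floor x
  have hup : ⌊x + α⌋ < ⌊x⌋ + 2 := by
    rw [Int.floor_lt]; push_cast; linarith
  have hlow : ⌊x⌋ ≤ ⌊x + α⌋ := by
    rw [Int.le_floor]; push_cast; linarith
  constructor
  · constructor
    · intro h
      have : ⌊x⌋ + 1 ≤ ⌊x + α⌋ := by
        rw [Int.le_floor]; push_cast; linarith
      omega
    · intro h
      have : ((⌊x⌋ + 1 : ℤ) : ℝ) ≤ x + α := by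
        rw [← h]; exact Int.floor_le (x + α)
      push_cast at this; linarith
  · constructor
    · intro h
      have : ¬ (⌊x⌋ + 1 ≤ ⌊x + α⌋) := by
        rw [Int.le_floor]; push_cast; linarith
      omega
    · intro h
      by_contra hc
      push_neg at hc
      have : ⌊x⌋ + 1 ≤ ⌊x + α⌋ := by
        rw [Int.le_floor]; push_cast; linarith
      omega

lemma inj_aux (hirr : Irrational α) (hα0 : 0 < α) (hα1 : α < 1)
    {n j j' : ℕ} (hjj : j < j') (hj'n : j' ≤ n)
    (H : ∀ i : ℕ, i < n →
      ((1 - α ≤ Int.fract (((i : ℝ) - (j : ℝ)) * α)) ↔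
        (1 - α ≤ Int.fract (((i : ℝ) - (j' : ℝ)) * α)))) :
    False := by
  have key : ∀ m : ℕ, m ≤ n →
      ⌊((m : ℝ) - (j : ℝ)) * α⌋ - ⌊((0 : ℝ) - (j : ℝ)) * α⌋ =
      ⌊((m : ℝ) - (j' : ℝ)) * α⌋ - ⌊((0 : ℝ) - (j' : ℝ)) * α⌋ := by
    intro m
    induction m with
    | zero => intro _; norm_num
    | succ m ih =>
      intro hm
      have hmn : m < n := hm
      have ihm := ih (Nat.le_of_lt hmn)
      have e1 : (((m + 1 : ℕ) : ℝ) - (j : ℝ)) * α = ((m : ℝ) - (j : ℝ)) * α + α := by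
        push_cast; ring
      have e2 : (((m + 1 : ℕ) : ℝ) - (j' : ℝ)) * α = ((m : ℝ) - (j' : ℝ)) * α + α := by
        push_cast; ring
      rcases le_or_gt (1 - α) (Int.fract (((m : ℝ) - (j : ℝ)) * α)) with h | h
      · have h' := (H m hmn).1 h
        rw [e1, e2, (floor_step hα0 hα1 _).1.1 h, (floor_step hα0 hα1 _).1.1 h']
        omega
      · have h' : Int.fract (((m : ℝ) - (j' : ℝ)) * α) < 1 - α := by
          by_contra hc; push_neg at hc
          exact absurd ((H m hmn).2 hc) (by linarith)
        rw [e1, e2, (floor_step hα0 hα1 _).2.1 h, (floor_step hα0 hα1 _).2.1 h']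
        omega
  have k1 := key j (le_trans hjj.le hj'n)
  have k2 := key j' hj'n
  set d : ℕ := j' - j with hd
  have hd1 : 1 ≤ d := by omega
  have hjd : (j' : ℝ) = (j : ℝ) + (d : ℝ) := by
    push_cast [hd, Nat.cast_sub hjj.le]; ring
  set D : ℝ := (d : ℝ) * α with hD
  have hDirr : Irrational D := hirr.natCast_mul (by omega)
  have e3 : ((j : ℝ) - (j : ℝ)) * α = 0 := by ring
  have e4 : ((j' : ℝ) - (j' : ℝ)) * α = 0 := by ring
  have e5 : ((j : ℝ) - (j' : ℝ)) * α = -D := by rw [hjd]; ring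
  have e6 : ((j' : ℝ) - (j : ℝ)) * α = D := by rw [hjd]; ring
  rw [e3, e5] at k1
  rw [e4, e6] at k2
  have hz : ⌊(0 : ℝ)⌋ = 0 := Int.floor_zero
  rw [hz] at k1 k2
  have := floor_sum_neg hDirr
  omega

/-- If no breakpoint `fract(-k α)` (`k ≤ n`) lies in `(b, x]`, then `x` and `b`
give the same status for all shifts `i < n`. -/
lemma key_step (hα0 : 0 < α) (hα1 : α < 1) {n : ℕ} {b x : ℝ}
    (hb0 : 0 ≤ b) (hbx : b ≤ x) (hx1 : x < 1)
    (hno : ∀ k : ℕ, k ≤ n → Int.fract (-(k : ℝ) * α) ∉ Set.Ioc b x) :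
    ∀ i : ℕ, i < n →
      (Int.fract (x + (i : ℝ) * α) ∈ Set.Ico (1 - α) 1 ↔
        Int.fract (b + (i : ℝ) * α) ∈ Set.Ico (1 - α) 1) := by
  intro i hi
  set y := Int.fract (b + (i : ℝ) * α) with hy
  have hy0 : 0 ≤ y := Int.fract_nonneg _
  have hy1 : y < 1 := Int.fract_lt_one _
  set δ := x - b with hδ
  have hδ0 : 0 ≤ δ := by linarith
  have hxiy : Int.fract (x + (i : ℝ) * α) = Int.fract (y + δ) := by
    have e : x + (i : ℝ) * α = (b + (i : ℝ) * α) + δ := by ring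
    rw [e, hy, fract_shift]
  have hbr : ∀ (k : ℕ), k ≤ n → ∀ δ' : ℝ, 0 < δ' → δ' ≤ δ →
      Int.fract (-(k : ℝ) * α) = b + δ' → False := by
    intro k hk δ' h1 h2 heq
    exact hno k hk (heq ▸ ⟨by linarith, by linarith⟩)
  have hval : ∀ δ' : ℝ, Int.fract ((b + δ') + (i : ℝ) * α) = Int.fract (y + δ') := by
    intro δ'
    have e : (b + δ') + (i : ℝ) * α = (b + (i : ℝ) * α) + δ' := by ring
    rw [e, hy, fract_shift]
  have hident : ∀ (c : ℝ) (k : ℤ), 0 ≤ c → c < 1 → (∃ z : ℤ, c = (k : ℝ) * α + (z : ℝ)) →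
      Int.fract ((k : ℝ) * α) = c := by
    rintro c k hc0 hc1 ⟨z, hz⟩
    have : Int.fract ((k : ℝ) * α) = Int.fract c := by
      rw [hz, Int.fract_add_intCast]
    rw [this, Int.fract_eq_self.2 ⟨hc0, hc1⟩]
  rw [hxiy]
  rcases lt_or_ge y (1 - α) with hcase | hcase
  · have h1 : y + δ < 1 - α := by
      by_contra hcon
      push_neg at hcon
      set δ' := 1 - α - y with hδ'
      have h1' : 0 < δ' := by linarith
      have h2' : δ' ≤ δ := by linarith
      apply hbr (i + 1) hi δ' h1' h2'
      have hfc : Int.fract ((b + δ') + (i : ℝ) * α) = 1 - α := by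
        rw [hval δ']
        have : y + δ' = 1 - α := by rw [hδ']; ring
        rw [this, Int.fract_eq_self.2 ⟨by linarith, by linarith⟩]
      have hK := Int.self_sub_floor ((b + δ') + (i : ℝ) * α)
      rw [hfc] at hK
      have hid := hident (b + δ') (-(i + 1 : ℤ)) (by linarith) (by linarith)
        ⟨⌊(b + δ') + (i : ℝ) * α⌋ + 1, by push_cast; linarith⟩
      have e : (((-(i + 1 : ℤ)) : ℤ) : ℝ) * α = -((i + 1 : ℕ) : ℝ) * α := by push_cast; ring
      rw [e] at hid
      exact hid
    have hfd : Int.fract (y + δ) = y + δ := Int.fract_eq_self.2 ⟨by linarith, by linarith⟩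
    rw [hfd]
    simp only [Set.mem_Ico]
    constructor
    · rintro ⟨h2, _⟩; exact absurd h2 (by linarith)
    · rintro ⟨h2, _⟩; exact absurd h2 (by linarith)
  · have h1 : y + δ < 1 := by
      by_contra hcon
      push_neg at hcon
      set δ' := 1 - y with hδ'
      have h1' : 0 < δ' := by linarith
      have h2' : δ' ≤ δ := by linarith
      apply hbr i (le_of_lt hi) δ' h1' h2'
      have hfc : Int.fract ((b + δ') + (i : ℝ) * α) = 0 := by
        rw [hval δ']
        have : y + δ' = 1 := by rw [hδ']; ring
        rw [this, Int.fract_one]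
      have hK := Int.self_sub_floor ((b + δ') + (i : ℝ) * α)
      rw [hfc] at hK
      have hid := hident (b + δ') (-(i : ℤ)) (by linarith) (by linarith)
        ⟨⌊(b + δ') + (i : ℝ) * α⌋, by push_cast; linarith⟩
      have e : (((-(i : ℤ)) : ℤ) : ℝ) * α = -((i : ℕ) : ℝ) * α := by push_cast; ring
      rw [e] at hid
      exact hid
    have hfd : Int.fract (y + δ) = y + δ := Int.fract_eq_self.2 ⟨by linarith, h1⟩
    rw [hfd]
    simp only [Set.mem_Ico]
    constructor
    · intro _; exact ⟨hcase, hy1⟩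
    · intro _; exact ⟨by linarith, h1⟩

lemma small_step (hirr : Irrational α) {ε : ℝ} (hε : 0 < ε) (hε1 : ε ≤ 1) :
    ∃ d : ℕ, 1 ≤ d ∧ (Int.fract ((d : ℝ) * α) ∈ Set.Ioo 0 ε ∨
      Int.fract ((d : ℝ) * α) ∈ Set.Ioo (1 - ε) 1) := by
  obtain ⟨N, hN⟩ := exists_nat_gt (1 / ε)
  have hN0 : 0 < (N : ℝ) := lt_trans (by positivity) hN
  have hN0' : 0 < N := by exact_mod_cast hN0
  have hεN : 1 < ε * N := by
    rw [div_lt_iff₀ hε] at hN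
    nlinarith
  have hmaps : ∀ k ∈ Finset.range (N + 1),
      ⌊(N : ℝ) * Int.fract ((k : ℝ) * α)⌋ ∈ Finset.Ico (0 : ℤ) (N : ℤ) := by
    intro k _
    rw [Finset.mem_Ico]
    constructor
    · apply Int.le_floor.2; push_cast
      exact mul_nonneg hN0.le (Int.fract_nonneg _)
    · apply Int.floor_lt.2; push_cast
      have := Int.fract_lt_one ((k : ℝ) * α)
      nlinarith [Int.fract_nonneg ((k : ℝ) * α)]
  have hcard : (Finset.Ico (0 : ℤ) (N : ℤ)).card < (Finset.range (N + 1)).card := by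
    rw [Finset.card_range, Int.card_Ico]
    simp
  obtain ⟨a, ha, b, hb, hab, hfab⟩ :=
    Finset.exists_ne_map_eq_of_card_lt_of_maps_to hcard hmaps
  have main : ∀ a b : ℕ, a < b →
      ⌊(N : ℝ) * Int.fract ((a : ℝ) * α)⌋ = ⌊(N : ℝ) * Int.fract ((b : ℝ) * α)⌋ →
      ∃ d : ℕ, 1 ≤ d ∧ (Int.fract ((d : ℝ) * α) ∈ Set.Ioo 0 ε ∨
        Int.fract ((d : ℝ) * α) ∈ Set.Ioo (1 - ε) 1) := by
    intro a b hlt hfeq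
    set fa := Int.fract ((a : ℝ) * α) with hfa
    set fb := Int.fract ((b : ℝ) * α) with hfb
    have hsmall : |fb - fa| < ε := by
      have h1 : (⌊(N : ℝ) * fa⌋ : ℝ) ≤ (N : ℝ) * fa := Int.floor_le _
      have h2 : (N : ℝ) * fa < ⌊(N : ℝ) * fa⌋ + 1 := Int.lt_floor_add_one _
      have h3 : (⌊(N : ℝ) * fb⌋ : ℝ) ≤ (N : ℝ) * fb := Int.floor_le _
      have h4 : (N : ℝ) * fb < ⌊(N : ℝ) * fb⌋ + 1 := Int.lt_floor_add_one _
      have h5 : ((⌊(N : ℝ) * fa⌋ : ℤ) : ℝ) = ((⌊(N : ℝ) * fb⌋ : ℤ) : ℝ) := by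
        exact_mod_cast hfeq
      rw [abs_lt]
      constructor <;> nlinarith
    refine ⟨b - a, by omega, ?_⟩
    have hcast : ((b - a : ℕ) : ℝ) = (b : ℝ) - (a : ℝ) := by
      push_cast [Nat.cast_sub hlt.le]; ring
    have hirrd : Irrational (((b - a : ℕ) : ℝ) * α) := hirr.natCast_mul (by omega)
    have hfd0 : Int.fract (((b - a : ℕ) : ℝ) * α) ≠ 0 := fract_ne_zero hirrd
    have hfd : Int.fract (((b - a : ℕ) : ℝ) * α) = Int.fract (fb - fa) := by
      rw [hcast]
      have e : (b : ℝ) * α - (a : ℝ) * α = fb - fa + ((⌊(b : ℝ) * α⌋ - ⌊(a : ℝ) * α⌋ : ℤ) : ℝ) := by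
        rw [hfa, hfb, Int.fract, Int.fract]; push_cast; ring
      rw [show ((b : ℝ) - (a : ℝ)) * α = (b : ℝ) * α - (a : ℝ) * α by ring, e,
        Int.fract_add_intCast]
    rw [abs_lt] at hsmall
    rcases le_or_gt 0 (fb - fa) with ht | ht
    · left
      have : Int.fract (fb - fa) = fb - fa := Int.fract_eq_self.2 ⟨ht, by linarith⟩
      rw [hfd, this]
      refine ⟨?_, by linarith⟩
      rcases lt_or_eq_of_le ht with h | h
      · exact h
      · exfalso; apply hfd0; rw [hfd, ← h, Int.fract_zero]
    · right
      have h01 : Int.fract (fb - fa) = fb - fa + 1 := by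
        have e : fb - fa = (fb - fa + 1) + ((-1 : ℤ) : ℝ) := by push_cast; ring
        conv_lhs => rw [e, Int.fract_add_intCast]
        exact Int.fract_eq_self.2 ⟨by linarith, by linarith⟩
      rw [hfd, h01]
      exact ⟨by linarith, by linarith⟩
  rcases hab.lt_or_gt with h | h
  · exact main a b h hfab
  · exact main b a h hfab.symm

lemma dens (hirr : Irrational α) {l u : ℝ} (hl : 0 ≤ l) (hlu : l < u) (hu : u ≤ 1) :
    ∃ m : ℕ, 1 ≤ m ∧ Int.fract ((m : ℝ) * α) ∈ Set.Ioo l u := by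
  set ε := u - l with hε
  have hε0 : 0 < ε := by linarith
  have hε1 : ε ≤ 1 := by linarith
  obtain ⟨d, hd1, hcase⟩ := small_step hirr hε0 hε1
  set x : ℕ → ℝ := fun k => Int.fract (((k * d : ℕ) : ℝ) * α) with hx
  set η := Int.fract ((d : ℝ) * α) with hη
  have hx1 : x 1 = η := by
    rw [hx, hη]; norm_num
  have hx0 : ∀ k, 0 ≤ x k := fun k => Int.fract_nonneg _
  have hxlt : ∀ k, x k < 1 := fun k => Int.fract_lt_one _
  have hxk : ∀ k : ℕ, x k = Int.fract (((k * d : ℕ) : ℝ) * α) := fun k => rfl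
  have hrec : ∀ k : ℕ, x (k + 1) = Int.fract (x k + η) := by
    intro k
    rw [hxk (k + 1), hxk k, hη]
    have e : (((k + 1) * d : ℕ) : ℝ) * α = ((k * d : ℕ) : ℝ) * α + (d : ℝ) * α := by
      push_cast; ring
    rw [e, ← fract_shift (((k * d : ℕ) : ℝ) * α) ((d : ℝ) * α)]
    rw [show Int.fract (((k * d : ℕ) : ℝ) * α) + (d : ℝ) * α
        = (d : ℝ) * α + Int.fract (((k * d : ℕ) : ℝ) * α) by ring,
      ← fract_shift ((d : ℝ) * α) _]
    rw [add_comm]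
  rcases hcase with hA | hB
  · obtain ⟨hη0, hηε⟩ := hA
    have step : ∀ k : ℕ, x (k + 1) ≤ l → x (k + 2) = x (k + 1) + η := by
      intro k hk
      rw [hrec (k + 1), Int.fract_eq_self.2 ⟨by linarith [hx0 (k + 1)], by linarith⟩]
    have hgoal : ∃ m : ℕ, 1 ≤ m ∧ x m ∈ Set.Ioo l u := by
      by_contra hcon
      push_neg at hcon
      have all_le : ∀ k : ℕ, x (k + 1) ≤ l := by
        intro k
        induction k with
        | zero =>
          show x 1 ≤ l
          by_contra h
          push_neg at h
          have hmem : x 1 ∈ Set.Ioo l u := ⟨h, by rw [hx1] at h ⊢; linarith⟩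
          exact hcon 1 le_rfl hmem
        | succ k ih =>
          have hv : x (k + 2) = x (k + 1) + η := step k ih
          by_contra h
          push_neg at h
          exact absurd ⟨h, by rw [hv]; linarith⟩ (hcon (k + 2) (by omega))
      have grow : ∀ k : ℕ, ((k : ℝ) + 1) * η ≤ x (k + 1) := by
        intro k
        induction k with
        | zero => rw [hx1]; norm_num
        | succ k ih =>
          rw [step k (all_le k)]
          push_cast; nlinarith
      obtain ⟨k, hk⟩ := exists_nat_gt (l / η)
      have h1 : l < (k : ℝ) * η := by
        rw [div_lt_iff₀ hη0] at hk; nlinarith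
      have h2 := grow k
      have h3 := all_le k
      nlinarith
    obtain ⟨m, hm1, hm⟩ := hgoal
    exact ⟨m * d, Nat.mul_pos hm1 hd1, hm⟩
  · obtain ⟨hη0, hη1⟩ := hB
    set θ := 1 - η with hθ
    have hθ0 : 0 < θ := by rw [hθ]; linarith
    have hθε : θ < ε := by rw [hθ]; linarith
    have step : ∀ k : ℕ, u ≤ x (k + 1) → x (k + 2) = x (k + 1) - θ := by
      intro k hk
      rw [hrec (k + 1)]
      have e : x (k + 1) + η = (x (k + 1) - θ) + ((1 : ℤ) : ℝ) := by
        rw [hθ]; push_cast; ring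
      rw [e, Int.fract_add_intCast, Int.fract_eq_self.2 ⟨by linarith, by linarith [hxlt (k + 1)]⟩]
    have hgoal : ∃ m : ℕ, 1 ≤ m ∧ x m ∈ Set.Ioo l u := by
      by_contra hcon
      push_neg at hcon
      have all_ge : ∀ k : ℕ, u ≤ x (k + 1) := by
        intro k
        induction k with
        | zero =>
          show u ≤ x 1
          by_contra h
          push_neg at h
          have hll : l < x 1 := by
            rw [hx1]
            calc l ≤ 1 - ε := by linarith
              _ < η := hη0
          have hmem : x 1 ∈ Set.Ioo l u := ⟨hll, h⟩
          exact hcon 1 le_rfl hmem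
        | succ k ih =>
          have hv : x (k + 2) = x (k + 1) - θ := step k ih
          by_contra h
          push_neg at h
          refine absurd ⟨?_, h⟩ (hcon (k + 2) (by omega))
          rw [hv]; linarith
      have decay : ∀ k : ℕ, x (k + 1) + (k : ℝ) * θ ≤ x 1 := by
        intro k
        induction k with
        | zero => norm_num
        | succ k ih =>
          rw [step k (all_ge k)]
          push_cast; linarith
      obtain ⟨k, hk⟩ := exists_nat_gt (x 1 / θ)
      have h1 : x 1 < (k : ℝ) * θ := by
        rw [div_lt_iff₀ hθ0] at hk; nlinarith
      have h2 := decay k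
      have h3 := all_ge k
      nlinarith
    obtain ⟨m, hm1, hm⟩ := hgoal
    exact ⟨m * d, Nat.mul_pos hm1 hd1, hm⟩

end SturmianAux

open SturmianAux in
/-- The characteristic Sturmian word `w = v 1, v 2, …` with
`v n = χ_[1-α,1)(n α mod 1)` (α irrational) has complexity `p_w(n) = n + 1`:
exactly `n + 1` distinct factors of each length `n ≥ 1`. -/
theorem sturmian_complexity (α : ℝ) (hirr : Irrational α) (hα0 : 0 < α) (hα1 : α < 1)
    (v : ℕ → Bool)
    (hv : ∀ n : ℕ, v n = decide (Int.fract (n * α) ∈ Set.Ico (1 - α) 1)) :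
    ∀ n : ℕ, 1 ≤ n →
      {f : Fin n → Bool | ∃ m : ℕ, ∀ i : Fin n, f i = v (m + 1 + i)}.ncard = n + 1 := by
  intro n hn
  classical
  set W : Fin (n + 1) → Fin n → Bool := fun j i =>
    decide (Int.fract ((((i : ℕ) : ℝ) - ((j : ℕ) : ℝ)) * α) ∈ Set.Ico (1 - α) 1) with hWdef
  have hconv : ∀ t : ℝ, (Int.fract t ∈ Set.Ico (1 - α) 1) ↔ (1 - α ≤ Int.fract t) := by
    intro t
    simp [Set.mem_Ico, Int.fract_lt_one t]
  -- the set of factors equals the range of W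
  have hset : {f : Fin n → Bool | ∃ m : ℕ, ∀ i : Fin n, f i = v (m + 1 + i)} = Set.range W := by
    ext f
    simp only [Set.mem_setOf_eq, Set.mem_range]
    constructor
    · rintro ⟨m, hm⟩
      set x := Int.fract (((m + 1 : ℕ) : ℝ) * α) with hxeq
      have hx0 : 0 ≤ x := Int.fract_nonneg _
      have hx1 : x < 1 := Int.fract_lt_one _
      set s : Finset ℕ :=
        (Finset.range (n + 1)).filter (fun k => Int.fract (-(k : ℝ) * α) ≤ x) with hs
      have hs0 : 0 ∈ s := by
        rw [hs, Finset.mem_filter, Finset.mem_range]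
        refine ⟨by omega, ?_⟩
        simpa using hx0
      obtain ⟨j, hjs, hjmax⟩ :=
        Finset.exists_max_image s (fun k => Int.fract (-(k : ℝ) * α)) ⟨0, hs0⟩
      rw [hs, Finset.mem_filter, Finset.mem_range] at hjs
      obtain ⟨hjn, hjx⟩ := hjs
      set b := Int.fract (-(j : ℝ) * α) with hbeq
      have hno : ∀ k : ℕ, k ≤ n → Int.fract (-(k : ℝ) * α) ∉ Set.Ioc b x := by
        rintro k hk ⟨h1, h2⟩
        have hks : k ∈ s := by
          rw [hs, Finset.mem_filter, Finset.mem_range]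
          exact ⟨by omega, h2⟩
        have := hjmax k hks
        linarith
      have hiff := key_step hα0 hα1 (Int.fract_nonneg _) hjx hx1 hno
      refine ⟨⟨j, by omega⟩, ?_⟩
      funext i
      have e1 : Int.fract (x + ((i : ℕ) : ℝ) * α)
          = Int.fract (((m + 1 + (i : ℕ) : ℕ) : ℝ) * α) := by
        rw [hxeq, fract_shift]
        congr 1
        push_cast; ring
      have e2 : Int.fract (b + ((i : ℕ) : ℝ) * α)
          = Int.fract ((((i : ℕ) : ℝ) - ((j : ℕ) : ℝ)) * α) := by
        rw [hbeq, fract_shift]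
        congr 1
        ring
      rw [hWdef]
      simp only
      rw [hm i, hv]
      rw [decide_eq_decide]
      rw [← e2, ← e1]
      exact ((hiff (i : ℕ) i.isLt)).symm
    · rintro ⟨j, rfl⟩
      set b := Int.fract (-((j : ℕ) : ℝ) * α) with hbeq
      have hb0 : 0 ≤ b := Int.fract_nonneg _
      have hb1 : b < 1 := Int.fract_lt_one _
      have hjn : (j : ℕ) ≤ n := by omega
      -- it suffices to find a good upper bound uu
      have key : ∀ uu : ℝ, b < uu → uu ≤ 1 →
          (∀ k : ℕ, k ≤ n → Int.fract (-(k : ℝ) * α) ∉ Set.Ioo b uu) →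
          ∃ m : ℕ, ∀ i : Fin n, W j i = v (m + 1 + (i : ℕ)) := by
        intro uu hbu hu1 hnoo
        obtain ⟨m₀, hm1, hmIoo⟩ := dens hirr hb0 hbu hu1
        obtain ⟨m, rfl⟩ : ∃ m, m₀ = m + 1 := ⟨m₀ - 1, by omega⟩
        set x := Int.fract (((m + 1 : ℕ) : ℝ) * α) with hxeq
        have hxmem : x ∈ Set.Ioo b uu := by
          rw [hxeq]; exact_mod_cast hmIoo
        have hx1 : x < 1 := Int.fract_lt_one _
        have hno : ∀ k : ℕ, k ≤ n → Int.fract (-(k : ℝ) * α) ∉ Set.Ioc b x := by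
          rintro k hk ⟨h1, h2⟩
          exact hnoo k hk ⟨h1, lt_of_le_of_lt h2 hxmem.2⟩
        have hiff := key_step hα0 hα1 hb0 hxmem.1.le hx1 hno
        refine ⟨m, fun i => ?_⟩
        have e1 : Int.fract (x + ((i : ℕ) : ℝ) * α)
            = Int.fract (((m + 1 + (i : ℕ) : ℕ) : ℝ) * α) := by
          rw [hxeq, fract_shift]
          congr 1
          push_cast; ring
        have e2 : Int.fract (b + ((i : ℕ) : ℝ) * α)
            = Int.fract ((((i : ℕ) : ℝ) - ((j : ℕ) : ℝ)) * α) := by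
          rw [hbeq, fract_shift]
          congr 1
          ring
        rw [hWdef]
        simp only
        rw [hv, decide_eq_decide, ← e2, ← e1]
        exact (hiff (i : ℕ) i.isLt).symm
      set T : Finset ℝ :=
        ((Finset.range (n + 1)).image (fun k : ℕ => Int.fract (-(k : ℝ) * α))).filter
          (fun c => b < c) with hT
      by_cases hTne : T.Nonempty
      · set M := T.min' hTne with hM
        have hmemT : M ∈ T := T.min'_mem hTne
        rw [hT, Finset.mem_filter, Finset.mem_image] at hmemT
        obtain ⟨⟨k₀, hk₀, hk₀e⟩, hbk₀⟩ := hmemT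
        apply key M hbk₀ (by rw [← hk₀e]; exact (Int.fract_lt_one _).le)
        rintro k hk ⟨h1, h2⟩
        have hkT : Int.fract (-(k : ℝ) * α) ∈ T := by
          rw [hT, Finset.mem_filter, Finset.mem_image]
          exact ⟨⟨k, Finset.mem_range.2 (by omega), rfl⟩, h1⟩
        have hMle : M ≤ Int.fract (-(k : ℝ) * α) := Finset.min'_le T _ hkT
        linarith
      · apply key 1 hb1 le_rfl
        rintro k hk ⟨h1, _⟩
        apply hTne
        refine ⟨Int.fract (-(k : ℝ) * α), ?_⟩
        rw [hT, Finset.mem_filter, Finset.mem_image]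
        exact ⟨⟨k, Finset.mem_range.2 (by omega), rfl⟩, h1⟩
  -- W is injective
  have hWinj : Function.Injective W := by
    intro j j' hW
    by_contra hne
    have hne' : (j : ℕ) ≠ (j' : ℕ) := fun h => hne (Fin.ext h)
    have hfun : ∀ i : Fin n, W j i = W j' i := fun i => congrFun hW i
    rcases hne'.lt_or_gt with h | h
    · apply inj_aux hirr hα0 hα1 h (by omega : (j' : ℕ) ≤ n)
      intro i hi
      have := hfun ⟨i, hi⟩
      rw [hWdef] at this
      simp only at this
      rw [decide_eq_decide, hconv, hconv] at this
      exact this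
    · apply inj_aux hirr hα0 hα1 h (by omega : (j : ℕ) ≤ n)
      intro i hi
      have := hfun ⟨i, hi⟩
      rw [hWdef] at this
      simp only at this
      rw [decide_eq_decide, hconv, hconv] at this
      exact this.symm
  rw [hset, ← Set.image_univ, Set.ncard_image_of_injective _ hWinj, Set.ncard_univ,
    Nat.card_eq_fintype_card, Fintype.card_fin]
end

section
/- For every irrational α ∈ (0,1) and every k ∈ ℕ, the word v_{α,0}(1) … v_{α,0}(q_k − 2) is a palindrome, where q_k is the k-th continued fraction denominator of α. -/
/-!
Let `p / q` be a convergent of `α` with `q = q k`, `k ≥ 1`, write `ε = q α - p` and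
`θ j = fract (j α)`. If `n + m + 1 = q`, then `θ n + θ m ≡ ε - α (mod 1)`, so `θ n ≥ 1 - α > θ m`
forces `θ m ≤ ε` or `1 - θ n < -ε`. Both contradict the best approximation property
`|q α - p| < |j α - p'|` for `0 < j < q`, which follows from the unimodularity of two consecutive
convergents together with the alternating signs and decreasing sizes of their errors.
Hence `v n = v m` whenever `n + m + 1 = q`, which is the palindrome property.
-/

section BestApproximation

variable {R : Type*} [CommRing R] [LinearOrder R] [IsStrictOrderedRing R]

theorem abs_le_abs_add_of_mul_nonneg {a b : R} (h : 0 ≤ a * b) : |a| ≤ |a + b| :=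
  sq_le_sq.1 (by nlinarith [sq_nonneg b])

theorem Int.exists_eq_mul_add_mul_of_isUnit {a b c d : ℤ} (h : IsUnit (a * d - b * c))
    (u w : ℤ) : ∃ x y : ℤ, u = x * a + y * c ∧ w = x * b + y * d := by
  have hsq : (a * d - b * c) * (a * d - b * c) = 1 := Int.isUnit_mul_self h
  exact ⟨(a * d - b * c) * (u * d - w * c), (a * d - b * c) * (a * w - b * u),
    by linear_combination (-u) * hsq, by linear_combination (-w) * hsq⟩

theorem Int.ne_zero_and_mul_nonpos_of_eq_mul_add_mul {q₀ q₁ j x y : ℤ} (hq₀ : 0 ≤ q₀)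
    (hj0 : 0 < j) (hj : j < q₁) (h : j = x * q₀ + y * q₁) : x ≠ 0 ∧ x * y ≤ 0 := by
  constructor
  · rintro rfl
    rcases le_or_gt y 0 with hy | hy <;> nlinarith
  · rcases lt_trichotomy y 0 with hy | rfl | hy
    · have : 0 < x := by by_contra! hx; nlinarith
      nlinarith
    · simp
    · have : x < 0 := by by_contra! hx; nlinarith
      nlinarith

theorem abs_mul_sub_lt_abs_mul_sub_of_isUnit {α : R} {q₀ p₀ q₁ p₁ j p : ℤ}
    (hdet : IsUnit (q₀ * p₁ - p₀ * q₁)) (hq₀ : 0 ≤ q₀)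
    (hsign : (q₀ * α - p₀) * (q₁ * α - p₁) ≤ 0) (hlt : |q₁ * α - p₁| < |q₀ * α - p₀|)
    (hj0 : 0 < j) (hj : j < q₁) : |q₁ * α - p₁| < |j * α - p| := by
  obtain ⟨x, y, rfl, rfl⟩ := Int.exists_eq_mul_add_mul_of_isUnit hdet j p
  obtain ⟨hx, hxy⟩ := Int.ne_zero_and_mul_nonpos_of_eq_mul_add_mul hq₀ hj0 hj rfl
  have hx1 : (1 : R) ≤ |(x : R)| := by exact_mod_cast Int.one_le_abs hx
  have hsplit : ((x * q₀ + y * q₁ : ℤ) : R) * α - (x * p₀ + y * p₁ : ℤ)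
      = x * (q₀ * α - p₀) + y * (q₁ * α - p₁) := by push_cast; ring
  have hsame : 0 ≤ (x * (q₀ * α - p₀)) * (y * (q₁ * α - p₁)) := by
    have : ((x * y : ℤ) : R) ≤ 0 := by exact_mod_cast hxy
    push_cast at this
    nlinarith
  calc |(q₁ : R) * α - p₁| < |(q₀ : R) * α - p₀| := hlt
    _ ≤ |(x : R)| * |(q₀ : R) * α - p₀| := le_mul_of_one_le_left (abs_nonneg _) hx1
    _ = |x * ((q₀ : R) * α - p₀)| := (abs_mul _ _).symm
    _ ≤ _ := hsplit ▸ abs_le_abs_add_of_mul_nonneg hsame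

end BestApproximation

namespace GenContFract

theorem exists_int_eq_contsAux {K : Type*} [Field K] [LinearOrder K] [FloorRing K] (v : K) :
    ∀ n, ∃ a b : ℤ, (GenContFract.of v).contsAux n = ⟨a, b⟩
  | 0 => ⟨1, 0, by simp [contsAux]⟩
  | 1 => ⟨⌊v⌋, 1, by simp [contsAux, of_h_eq_floor]⟩
  | n + 2 => by
    rcases hs : (GenContFract.of v).s.get? n with _ | gp
    · rw [contsAux_stable_step_of_terminated hs]
      exact exists_int_eq_contsAux v (n + 1)
    · obtain ⟨a₀, b₀, h₀⟩ := exists_int_eq_contsAux v n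
      obtain ⟨a₁, b₁, h₁⟩ := exists_int_eq_contsAux v (n + 1)
      obtain ⟨hgpa, z, hgpb⟩ := of_partNum_eq_one_and_exists_int_partDen_eq hs
      refine ⟨z * a₁ + a₀, z * b₁ + b₀, ?_⟩
      rw [contsAux_recurrence hs h₀ h₁, hgpa, hgpb]
      push_cast
      simp only [one_mul]

theorem exists_int_eq_nums_and_dens {K : Type*} [Field K] [LinearOrder K] [FloorRing K] (v : K)
    (n : ℕ) : ∃ p q : ℤ, (GenContFract.of v).nums n = p ∧ (GenContFract.of v).dens n = q :=
  let ⟨p, q, h⟩ := exists_int_eq_contsAux v (n + 1)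
  ⟨p, q, congrArg Pair.a h, congrArg Pair.b h⟩

end GenContFract

namespace Irrational

open GenContFract

variable {α : ℝ} (hα : Irrational α)
include hα

theorem not_terminatedAt_of (n : ℕ) : ¬(GenContFract.of α).TerminatedAt n := fun h ↦
  hα <| by
    obtain ⟨q, rfl⟩ := (terminates_iff_rat α).1 ⟨n, h⟩
    exact ⟨q, rfl⟩

theorem exists_stream_eq_some_fr_pos (n : ℕ) :
    ∃ ifp, IntFractPair.stream α n = some ifp ∧ 0 < ifp.fr := by
  have hne : IntFractPair.stream α (n + 1) ≠ none := fun h ↦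
    hα.not_terminatedAt_of n (of_terminatedAt_n_iff_succ_nth_intFractPair_stream_eq_none.2 h)
  rw [Ne, IntFractPair.succ_nth_stream_eq_none_iff] at hne
  push Not at hne
  obtain ⟨ifp, hifp⟩ := Option.ne_none_iff_exists'.1 hne.1
  exact ⟨ifp, hifp, (IntFractPair.nth_stream_fr_nonneg hifp).lt_of_ne' (hne.2 ifp hifp)⟩

theorem one_le_dens (n : ℕ) : 1 ≤ (GenContFract.of α).dens n :=
  calc (1 : ℝ) ≤ Nat.fib (n + 1) := by exact_mod_cast Nat.fib_pos.2 n.succ_pos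
    _ ≤ _ := succ_nth_fib_le_of_nth_den (Or.inr (hα.not_terminatedAt_of _))

-- This is `α = (p n + ξ p (n + 1)) / (q n + ξ q (n + 1))` for the complete quotient `ξ = fr⁻¹`.
theorem dens_succ_mul_sub_nums_succ {n : ℕ} {ifp : IntFractPair ℝ}
    (h : IntFractPair.stream α (n + 1) = some ifp) (hfr : 0 < ifp.fr) :
    (GenContFract.of α).dens (n + 1) * α - (GenContFract.of α).nums (n + 1)
      = -ifp.fr * ((GenContFract.of α).dens n * α - (GenContFract.of α).nums n) := by
  have hval := compExactValue_correctness_of_stream_eq_some h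
  simp only [GenContFract.compExactValue, hfr.ne', if_false, nextConts, nextNum, nextDen] at hval
  change α = (ifp.fr⁻¹ * (GenContFract.of α).nums (n + 1) + 1 * (GenContFract.of α).nums n) /
    (ifp.fr⁻¹ * (GenContFract.of α).dens (n + 1) + 1 * (GenContFract.of α).dens n) at hval
  have hden : 0 < ifp.fr⁻¹ * (GenContFract.of α).dens (n + 1) + 1 * (GenContFract.of α).dens n := by
    have := hα.one_le_dens n
    have := hα.one_le_dens (n + 1)
    positivity
  rw [eq_div_iff hden.ne'] at hval
  have hinv : ifp.fr * ifp.fr⁻¹ = 1 := mul_inv_cancel₀ hfr.ne'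
  linear_combination ifp.fr * hval +
    ((GenContFract.of α).nums (n + 1) - (GenContFract.of α).dens (n + 1) * α) * hinv

theorem abs_dens_mul_sub_nums_lt (n : ℕ) {j p : ℤ} (hj0 : 0 < j)
    (hj : (j : ℝ) < (GenContFract.of α).dens (n + 1)) :
    |(GenContFract.of α).dens (n + 1) * α - (GenContFract.of α).nums (n + 1)| < |j * α - p| := by
  obtain ⟨p₀, q₀, hp₀, hq₀⟩ := exists_int_eq_nums_and_dens α n
  obtain ⟨p₁, q₁, hp₁, hq₁⟩ := exists_int_eq_nums_and_dens α (n + 1)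
  have hdet : (GenContFract.of α).nums n * (GenContFract.of α).dens (n + 1) -
      (GenContFract.of α).dens n * (GenContFract.of α).nums (n + 1) = (-1) ^ (n + 1) :=
    SimpContFract.determinant (s := SimpContFract.of α) (hα.not_terminatedAt_of n)
  obtain ⟨ifp, hs, hfr⟩ := hα.exists_stream_eq_some_fr_pos (n + 1)
  have hrec := hα.dens_succ_mul_sub_nums_succ hs hfr
  have hq₀pos : 1 ≤ q₀ := by exact_mod_cast hq₀ ▸ hα.one_le_dens n
  rw [hp₀, hq₀, hp₁, hq₁] at hrec hdet
  rw [hq₁] at hj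
  rw [hp₁, hq₁]
  have hne : (q₀ : ℝ) * α - p₀ ≠ 0 := by
    rw [sub_ne_zero]
    exact (hα.intCast_mul (by omega)).ne_int p₀
  refine abs_mul_sub_lt_abs_mul_sub_of_isUnit (q₀ := q₀) (p₀ := p₀) ?_ (by omega) ?_ ?_ hj0
    (by exact_mod_cast hj)
  · have : q₀ * p₁ - p₀ * q₁ = -(-1) ^ (n + 1) := by
      have : ((q₀ * p₁ - p₀ * q₁ : ℤ) : ℝ) = ((-(-1) ^ (n + 1) : ℤ) : ℝ) := by
        push_cast; linear_combination -hdet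
      exact_mod_cast this
    rw [this]
    exact (isUnit_neg_one.pow _).neg
  · rw [hrec]
    nlinarith [sq_nonneg ((q₀ : ℝ) * α - p₀)]
  · rw [hrec, abs_mul, abs_neg, abs_of_pos hfr]
    exact mul_lt_of_lt_one_left (abs_pos.2 hne) (IntFractPair.nth_stream_fr_lt_one hs)

end Irrational

theorem List.palindrome_map_range {β : Type*} {f : ℕ → β} {N : ℕ}
    (h : ∀ i < N, f i = f (N - 1 - i)) : List.Palindrome ((List.range N).map f) := by
  refine .of_reverse_eq ?_
  rw [← List.map_reverse, List.range_eq_range', List.reverse_range', List.map_map,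
    ← List.range_eq_range']
  refine List.map_congr_left fun i hi ↦ ?_
  simp only [Function.comp_apply, zero_add]
  exact (h i (List.mem_range.1 hi)).symm

theorem one_sub_le_fract_of_add_add_one_eq {α : ℝ} {Q : ℕ} {P : ℤ}
    (hbest : ∀ j : ℕ, 0 < j → j < Q → ∀ p : ℤ, |Q * α - P| < |j * α - p|)
    {n m : ℕ} (hn : 0 < n) (hm : 0 < m) (hnm : n + m + 1 = Q)
    (h : 1 - α ≤ Int.fract (n * α)) : 1 - α ≤ Int.fract (m * α) := by
  by_contra! hlt
  set Z := P - ⌊(n : ℝ) * α⌋ - ⌊(m : ℝ) * α⌋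
  have hsum : Int.fract (n * α) + Int.fract (m * α) = Z - α + (Q * α - P) := by
    have : (Q : ℝ) = n + m + 1 := by exact_mod_cast hnm.symm
    rw [Int.fract, Int.fract, this]
    push_cast [Z]
    ring
  rcases le_or_gt Z 1 with hZ | hZ
  · have hbest_m := hbest m hm (by omega) ⌊(m : ℝ) * α⌋
    rw [← Int.fract, abs_of_nonneg (Int.fract_nonneg ((m : ℝ) * α))] at hbest_m
    have : (Z : ℝ) ≤ 1 := by exact_mod_cast hZ
    linarith [le_abs_self ((Q : ℝ) * α - P)]
  · have hbest_n := hbest n hn (by omega) (⌊(n : ℝ) * α⌋ + 1)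
    rw [Int.cast_add, Int.cast_one, ← sub_sub, ← Int.fract,
      abs_of_neg (sub_neg.2 (Int.fract_lt_one ((n : ℝ) * α)))] at hbest_n
    have : (2 : ℝ) ≤ Z := by exact_mod_cast hZ
    linarith [neg_abs_le ((Q : ℝ) * α - P)]

theorem sturmian_prefix_palindrome_general (α : ℝ) (hirr : Irrational α)
    (v : ℕ → Bool)
    (hv : ∀ n : ℕ, v n = decide (Int.fract (n * α) ∈ Set.Ico (1 - α) 1))
    (q : ℕ → ℕ) (hq : ∀ k, (q k : ℝ) = (GenContFract.of α).dens k) :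
    ∀ k : ℕ, List.Palindrome ((List.range (q k - 2)).map (fun i => v (i + 1))) := by
  intro k
  refine List.palindrome_map_range fun i hi ↦ ?_
  obtain ⟨a, rfl⟩ : ∃ a, k = a + 1 := by
    refine Nat.exists_eq_add_one.2 (Nat.pos_of_ne_zero ?_)
    rintro rfl
    have : q 0 = 1 := by exact_mod_cast (hq 0).trans GenContFract.zeroth_den_eq_one
    omega
  obtain ⟨P, -, hP, -⟩ := GenContFract.exists_int_eq_nums_and_dens α (a + 1)
  have hbest : ∀ j : ℕ, 0 < j → j < q (a + 1) → ∀ p : ℤ,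
      |q (a + 1) * α - P| < |j * α - p| := fun j hj0 hj p ↦ by
    rw [hq, ← hP]
    exact_mod_cast hirr.abs_dens_mul_sub_nums_lt a (j := j) (p := p) (by exact_mod_cast hj0)
      (by rw [← hq]; exact_mod_cast hj)
  rw [hv, hv]
  simp only [Set.mem_Ico, Int.fract_lt_one, and_true, decide_eq_decide]
  exact ⟨one_sub_le_fract_of_add_add_one_eq hbest (by omega) (by omega) (by omega),
    one_sub_le_fract_of_add_add_one_eq hbest (by omega) (by omega) (by omega)⟩

/-- For irrational `α ∈ (0,1)` with continued fraction denominators `q k`, the word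
`v 1 v 2 … v (q k - 2)` of the characteristic Sturmian sequence
`v n = χ_[1-α,1)(n α mod 1)` is a palindrome, for every `k`. -/
theorem sturmian_prefix_palindrome (α : ℝ) (hirr : Irrational α)
    (hα0 : 0 < α) (hα1 : α < 1)
    (v : ℕ → Bool)
    (hv : ∀ n : ℕ, v n = decide (Int.fract (n * α) ∈ Set.Ico (1 - α) 1))
    (q : ℕ → ℕ) (hq : ∀ k, (q k : ℝ) = (GenContFract.of α).dens k) :
    ∀ k : ℕ, List.Palindrome ((List.range (q k - 2)).map (fun i => v (i + 1))) :=
  sturmian_prefix_palindrome_general α hirr v hv q hq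
end

section
/- Let M_k(E) be SL(2,ℝ)-valued functions satisfying M_{k+1}(E) = M_{k-1}(E) M_k(E)^{a_{k+1}}. Define x_k(E) = tr M_k(E). Then for all k and all integers p ≥ 0, setting t_{(k,p)} = tr(M_{k-1} M_k^p), the Fricke–Vogt-type invariant t_{(k+1,0)}^2 + t_{(k,p)}^2 + t_{(k,p+1)}^2 − t_{(k+1,0)} t_{(k,p)} t_{(k,p+1)} is independent of p (it equals the same expression for p = 0). -/
open Matrix

lemma sq_eq_trace_smul (B : Matrix (Fin 2) (Fin 2) ℝ) :
    B ^ 2 = (trace B) • B - (B.det) • 1 := by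
  ext i j
  fin_cases i <;> fin_cases j <;>
    simp [pow_two, mul_apply, trace, det_fin_two, Fin.sum_univ_two, Matrix.one_apply] <;> ring

lemma trace_rec (A B : Matrix (Fin 2) (Fin 2) ℝ) (hB : B.det = 1) (p : ℕ) :
    trace (A * B ^ (p + 2)) = trace B * trace (A * B ^ (p + 1)) - trace (A * B ^ p) := by
  have h : A * B ^ (p + 2) = (trace B) • (A * B ^ (p + 1)) - A * B ^ p := by
    have : B ^ (p + 2) = B ^ p * B ^ 2 := pow_add B p 2
    rw [this, sq_eq_trace_smul B, hB]
    simp [mul_sub, mul_smul_comm, pow_succ, mul_assoc]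
  rw [h, trace_sub, trace_smul, smul_eq_mul]

/-- For SL(2,ℝ)-valued functions `M k` satisfying the trace-map recursion
`M (k+2) = M k * (M (k+1))^(a (k+2))`, the Fricke–Vogt-type invariant
`t_{(k+1,0)}² + t_{(k,p)}² + t_{(k,p+1)}² − t_{(k+1,0)} t_{(k,p)} t_{(k,p+1)}`,
where `t_{(k,p)} = tr (M (k-1) * (M k)^p)`, is independent of `p`. -/
theorem fricke_invariant_indep_of_p (a : ℕ → ℕ)
    (M : ℕ → ℝ → Matrix (Fin 2) (Fin 2) ℝ)
    (hdet : ∀ k E, (M k E).det = 1)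
    (hrec : ∀ k E, M (k + 2) E = M k E * (M (k + 1) E) ^ a (k + 2)) :
    ∀ (k : ℕ) (E : ℝ) (p : ℕ),
      (trace (M (k + 1) E)) ^ 2
        + (trace (M k E * (M (k + 1) E) ^ p)) ^ 2
        + (trace (M k E * (M (k + 1) E) ^ (p + 1))) ^ 2
        - trace (M (k + 1) E) * trace (M k E * (M (k + 1) E) ^ p)
            * trace (M k E * (M (k + 1) E) ^ (p + 1))
      = (trace (M (k + 1) E)) ^ 2
        + (trace (M k E * (M (k + 1) E) ^ 0)) ^ 2
        + (trace (M k E * (M (k + 1) E) ^ 1)) ^ 2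
        - trace (M (k + 1) E) * trace (M k E * (M (k + 1) E) ^ 0)
            * trace (M k E * (M (k + 1) E) ^ 1) := by
  intro k E p
  induction p with
  | zero => rfl
  | succ q ih =>
      rw [trace_rec (M k E) (M (k + 1) E) (hdet (k + 1) E) q, ← ih]
      ring
end
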